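/- If μ and μ′ are probability measures on X and f ∈ L²_μ ∩ L²_{μ′}, then |E^μ f − E^{μ′} f| ≤ 2 (E^μ|f|² + E^{μ′}|f|²)^{1/2} d_Hell(μ, μ′). -/

import Mathlib

/-!
With densities `p`, `q` of `μ`, `μ'` against `ν = μ + μ'`, the difference of expectations is
`∫ (p - q) f dν = ∫ f (√p + √q) · (√p - √q) dν`. Cauchy–Schwarz bounds it by
`‖f (√p + √q)‖₂ ‖√p - √q‖₂`; the first factor is at most `√(2 (E^μ f² + E^μ' f²))` since
`(√p + √q)² ≤ 2 (p + q)`, and the second is `√2 d_Hell(μ, μ')`.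
-/

open MeasureTheory

/-- The Hellinger distance between two measures, computed with respect to the common
dominating reference measure `μ + μ'`. -/
noncomputable def hellingerDist {X : Type*} [MeasurableSpace X] (μ μ' : Measure X) : ℝ :=
  Real.sqrt ((1 / 2) * ∫ u,
    (Real.sqrt ((μ.rnDeriv (μ + μ') u).toReal)
      - Real.sqrt ((μ'.rnDeriv (μ + μ') u).toReal)) ^ 2 ∂(μ + μ'))

section

variable {X : Type*} [MeasurableSpace X]

theorem hellingerDist_nonneg (μ μ' : Measure X) : 0 ≤ hellingerDist μ μ' :=
  Real.sqrt_nonneg _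

theorem two_mul_hellingerDist_sq (μ μ' : Measure X) :
    2 * hellingerDist μ μ' ^ 2 = ∫ u,
      (Real.sqrt ((μ.rnDeriv (μ + μ') u).toReal)
        - Real.sqrt ((μ'.rnDeriv (μ + μ') u).toReal)) ^ 2 ∂(μ + μ') := by
  rw [hellingerDist, Real.sq_sqrt (by positivity)]
  ring

theorem abs_integral_mul_le_sqrt_mul_sqrt {ν : Measure X} {g h : X → ℝ}
    (hg : MemLp g 2 ν) (hh : MemLp h 2 ν) :
    |∫ x, g x * h x ∂ν| ≤ √(∫ x, g x ^ 2 ∂ν) * √(∫ x, h x ^ 2 ∂ν) := by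
  have holder := integral_mul_norm_le_Lp_mul_Lq Real.HolderConjugate.two_two
    (by simpa using hg) (by simpa using hh)
  simp only [Real.norm_eq_abs, Real.rpow_two, sq_abs, ← Real.sqrt_eq_rpow] at holder
  calc |∫ x, g x * h x ∂ν| ≤ ∫ x, |g x| * |h x| ∂ν := by
        simpa only [abs_mul] using abs_integral_le_integral_abs (f := fun x => g x * h x)
    _ ≤ _ := holder

theorem sq_sqrt_sub_sqrt_le_add {a b : ℝ} (ha : 0 ≤ a) (hb : 0 ≤ b) :
    (√a - √b) ^ 2 ≤ a + b := by
  nlinarith [Real.sq_sqrt ha, Real.sq_sqrt hb, Real.sqrt_nonneg a, Real.sqrt_nonneg b]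

theorem sq_sqrt_add_sqrt_le_two_mul_add {a b : ℝ} (ha : 0 ≤ a) (hb : 0 ≤ b) :
    (√a + √b) ^ 2 ≤ 2 * (a + b) := by
  nlinarith [Real.sq_sqrt ha, Real.sq_sqrt hb, sq_nonneg (√a - √b)]

theorem sub_eq_sqrt_add_sqrt_mul_sqrt_sub_sqrt {a b : ℝ} (ha : 0 ≤ a) (hb : 0 ≤ b) :
    a - b = (√a + √b) * (√a - √b) := by
  nlinarith [Real.sq_sqrt ha, Real.sq_sqrt hb]

theorem abs_integral_sub_mul_le {ν : Measure X} {p q f : X → ℝ} (hp : 0 ≤ p) (hq : 0 ≤ q)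
    (hpm : Measurable p) (hqm : Measurable q) (hfm : Measurable f)
    (hpq : Integrable (fun x => p x + q x) ν)
    (hpqf : Integrable (fun x => (p x + q x) * f x ^ 2) ν) :
    |∫ x, (p x - q x) * f x ∂ν| ≤
      √(2 * ∫ x, (p x + q x) * f x ^ 2 ∂ν) * √(∫ x, (√(p x) - √(q x)) ^ 2 ∂ν) := by
  set g : X → ℝ := fun x => f x * (√(p x) + √(q x))
  set h : X → ℝ := fun x => √(p x) - √(q x)
  have hg_sq_le : ∀ x, g x ^ 2 ≤ 2 * ((p x + q x) * f x ^ 2) := fun x => by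
    have := sq_sqrt_add_sqrt_le_two_mul_add (hp x) (hq x)
    simp only [g, mul_pow]
    nlinarith [sq_nonneg (f x)]
  have hg_sq : Integrable (fun x => g x ^ 2) ν :=
    (hpqf.const_mul 2).mono' ((hfm.mul (hpm.sqrt.add hqm.sqrt)).pow_const 2).aestronglyMeasurable
      (ae_of_all _ fun x => by rw [Real.norm_eq_abs, abs_sq]; exact hg_sq_le x)
  have hh_sq : Integrable (fun x => h x ^ 2) ν :=
    hpq.mono' ((hpm.sqrt.sub hqm.sqrt).pow_const 2).aestronglyMeasurable
      (ae_of_all _ fun x => by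
        rw [Real.norm_eq_abs, abs_sq]; exact sq_sqrt_sub_sqrt_le_add (hp x) (hq x))
  have hg : MemLp g 2 ν :=
    (memLp_two_iff_integrable_sq (hfm.mul (hpm.sqrt.add hqm.sqrt)).aestronglyMeasurable).2 hg_sq
  have hh : MemLp h 2 ν :=
    (memLp_two_iff_integrable_sq (hpm.sqrt.sub hqm.sqrt).aestronglyMeasurable).2 hh_sq
  have factor : ∀ x, (p x - q x) * f x = g x * h x := fun x => by
    rw [sub_eq_sqrt_add_sqrt_mul_sqrt_sub_sqrt (hp x) (hq x)]
    ring
  calc |∫ x, (p x - q x) * f x ∂ν| = |∫ x, g x * h x ∂ν| := by simp_rw [factor]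
    _ ≤ √(∫ x, g x ^ 2 ∂ν) * √(∫ x, h x ^ 2 ∂ν) := abs_integral_mul_le_sqrt_mul_sqrt hg hh
    _ ≤ _ := by
      gcongr
      rw [← integral_const_mul]
      exact integral_mono hg_sq (hpqf.const_mul 2) hg_sq_le

end

/-- **Hellinger distance controls differences of expectations.**  If `μ, μ'` are
probability measures on `X` and `f ∈ L²_μ ∩ L²_{μ'}`, then
`|E^μ f − E^{μ'} f| ≤ 2 (E^μ |f|² + E^{μ'} |f|²)^{1/2} d_Hell(μ, μ')`. -/
theorem abs_integral_sub_le_hellinger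
    (X : Type*) [MeasurableSpace X]
    (μ μ' : Measure X) [IsProbabilityMeasure μ] [IsProbabilityMeasure μ']
    (f : X → ℝ) (hf : Measurable f)
    (hf2 : Integrable (fun x => |f x| ^ 2) μ) (hf2' : Integrable (fun x => |f x| ^ 2) μ') :
    |∫ x, f x ∂μ - ∫ x, f x ∂μ'| ≤
      2 * Real.sqrt ((∫ x, |f x| ^ 2 ∂μ) + ∫ x, |f x| ^ 2 ∂μ') * hellingerDist μ μ' := by
  simp_rw [sq_abs] at hf2 hf2' ⊢
  set ν := μ + μ'
  have hac : μ ≪ ν := Measure.absolutelyContinuous_of_le (Measure.le_add_right le_rfl)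
  have hac' : μ' ≪ ν := Measure.absolutelyContinuous_of_le (Measure.le_add_left le_rfl)
  have hf1 := (integrable_toReal_rnDeriv_mul_iff hac).2
    (((memLp_two_iff_integrable_sq hf.aestronglyMeasurable).2 hf2).integrable one_le_two)
  have hf1' := (integrable_toReal_rnDeriv_mul_iff hac').2
    (((memLp_two_iff_integrable_sq hf.aestronglyMeasurable).2 hf2').integrable one_le_two)
  have hf2ν := (integrable_toReal_rnDeriv_mul_iff hac).2 hf2
  have hf2ν' := (integrable_toReal_rnDeriv_mul_iff hac').2 hf2'
  have bound := abs_integral_sub_mul_le (ν := ν) (f := f)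
    (fun _ => ENNReal.toReal_nonneg) (fun _ => ENNReal.toReal_nonneg)
    (Measure.measurable_rnDeriv μ ν).ennreal_toReal
    (Measure.measurable_rnDeriv μ' ν).ennreal_toReal hf
    (Measure.integrable_toReal_rnDeriv.add Measure.integrable_toReal_rnDeriv)
    (by simp_rw [add_mul]; exact hf2ν.add hf2ν')
  simp only [sub_mul, add_mul] at bound
  rw [integral_sub hf1 hf1', integral_add hf2ν hf2ν', integral_toReal_rnDeriv_mul hac,
    integral_toReal_rnDeriv_mul hac', integral_toReal_rnDeriv_mul hac,
    integral_toReal_rnDeriv_mul hac', ← two_mul_hellingerDist_sq] at bound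
  refine bound.trans_eq ?_
  rw [Real.sqrt_mul zero_le_two, Real.sqrt_mul zero_le_two,
    Real.sqrt_sq (hellingerDist_nonneg μ μ')]
  linear_combination (√((∫ x, f x ^ 2 ∂μ) + ∫ x, f x ^ 2 ∂μ') * hellingerDist μ μ') *
    Real.mul_self_sqrt zero_le_two
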